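/- arXiv:1810.12124 — 3 statements merged into one kernel-verified Lean document; each statement's English description precedes it below -/
import Mathlib

section
/- Let 𝓔_X be a ballean on X and 𝓔_Y a ballean on Y, where Y is either bounded or locally finite (every bounded subset of Y is finite). If both X and Y are so-bounded, then the product ballean on X × Y is so-bounded. -/
/-- A ballean on a set `X`: a family of entourages containing the diagonal,
closed (up to enlargement) under `E ∘ F⁻¹`, and covering `X × X`. -/
structure Ballean (X : Type*) where
  ent : Set (Set (X × X))
  diag : ∀ E ∈ ent, ∀ x : X, (x, x) ∈ E
  comp : ∀ E ∈ ent, ∀ F ∈ ent, ∃ D ∈ ent,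
    ∀ x z : X, (∃ y : X, (x, y) ∈ E ∧ (z, y) ∈ F) → (x, z) ∈ D
  cover : ∀ x y : X, ∃ E ∈ ent, (x, y) ∈ E

/-- The ball `E[x] = {y : (x,y) ∈ E}`. -/
def ball {X : Type*} (E : Set (X × X)) (x : X) : Set X := {y | (x, y) ∈ E}

/-- A set is bounded in a ballean if it is contained in some ball. -/
def Ballean.Bdd {X : Type*} (B : Ballean X) (S : Set X) : Prop :=
  ∃ E ∈ B.ent, ∃ x : X, S ⊆ ball E x

/-- A ballean is so-bounded if every slowly oscillating `f : X → ℝ` is bounded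
outside some bounded set. -/
def Ballean.SoBounded {X : Type*} (B : Ballean X) : Prop :=
  ∀ f : X → ℝ,
    (∀ E ∈ B.ent, ∀ ε : ℝ, 0 < ε → ∃ S : Set X, B.Bdd S ∧
      ∀ x ∉ S, ∀ a ∈ ball E x, ∀ b ∈ ball E x, |f a - f b| < ε) →
    ∃ S : Set X, B.Bdd S ∧ ∃ C : ℝ, ∀ x ∉ S, |f x| ≤ C

/-- Union of two bounded sets is bounded. -/
lemma Ballean.bdd_union {X : Type*} (B : Ballean X) {S T : Set X}
    (hS : B.Bdd S) (hT : B.Bdd T) : B.Bdd (S ∪ T) := by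
  obtain ⟨E₁, hE₁, x₁, hSsub⟩ := hS
  obtain ⟨E₂, hE₂, x₂, hTsub⟩ := hT
  obtain ⟨G, hG, hGmem⟩ := B.cover x₁ x₂
  obtain ⟨D, hD, hDp⟩ := B.comp E₂ hE₂ E₂ hE₂
  obtain ⟨H, hH, hHp⟩ := B.comp G hG D hD
  obtain ⟨DH, hDH, hDHp⟩ := B.comp H hH H hH
  obtain ⟨K, hK, hKp⟩ := B.comp E₁ hE₁ DH hDH
  refine ⟨K, hK, x₁, ?_⟩
  intro v hv
  rcases hv with hv | hv
  · exact hKp x₁ v ⟨v, hSsub hv, B.diag DH hDH v⟩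
  · have h2 : (x₂, v) ∈ E₂ := hTsub hv
    have h3 : (v, x₂) ∈ D := hDp v x₂ ⟨v, B.diag E₂ hE₂ v, h2⟩
    have h4 : (x₁, v) ∈ H := hHp x₁ v ⟨x₂, hGmem, h3⟩
    have h5 : (v, x₁) ∈ DH := hDHp v x₁ ⟨v, B.diag H hH v, h4⟩
    exact hKp x₁ v ⟨x₁, B.diag E₁ hE₁ x₁, h5⟩

/-- A so-bounded ballean has a nonempty family of entourages. -/
lemma Ballean.ent_nonempty {X : Type*} (B : Ballean X) (h : B.SoBounded) :
    ∃ E, E ∈ B.ent := by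
  by_contra hc
  push_neg at hc
  obtain ⟨S, ⟨E, hE, _⟩, _⟩ :=
    h (fun _ => 0) (by intro E hE; exact absurd hE (hc E))
  exact hc E hE

/-- If `Y` is bounded or locally finite and both `X`, `Y` are so-bounded, then
the product ballean on `X × Y` (balls `E[x] × F[y]`, bounded sets those contained
in a product of bounded sets) is so-bounded. -/
theorem prod_soBounded {X Y : Type*} (BX : Ballean X) (BY : Ballean Y)
    (hY : BY.Bdd Set.univ ∨ ∀ S : Set Y, BY.Bdd S → S.Finite)
    (hXso : BX.SoBounded) (hYso : BY.SoBounded) :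
    ∀ f : X × Y → ℝ,
      (∀ E ∈ BX.ent, ∀ F ∈ BY.ent, ∀ ε : ℝ, 0 < ε →
        ∃ (S : Set X) (T : Set Y), BX.Bdd S ∧ BY.Bdd T ∧
          ∀ p : X × Y, p ∉ S ×ˢ T →
            ∀ a ∈ (ball E p.1) ×ˢ (ball F p.2), ∀ b ∈ (ball E p.1) ×ˢ (ball F p.2),
              |f a - f b| < ε) →
      ∃ (S : Set X) (T : Set Y), BX.Bdd S ∧ BY.Bdd T ∧
        ∃ C : ℝ, ∀ p : X × Y, p ∉ S ×ˢ T → |f p| ≤ C := by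
  intro f h
  obtain ⟨E₀, hE₀⟩ := BX.ent_nonempty hXso
  obtain ⟨F₀, hF₀⟩ := BY.ent_nonempty hYso
  obtain ⟨S', T', ⟨Ex, hEx, x₀, -⟩, ⟨Fy, hFy, y₀, -⟩, -⟩ := h E₀ hE₀ F₀ hF₀ 1 one_pos
  -- Every vertical slice `f (x, ·)` is slowly oscillating on `Y`, hence bounded
  -- outside a bounded set.
  have sliceY : ∀ x : X, ∃ T : Set Y, BY.Bdd T ∧ ∃ C, ∀ y ∉ T, |f (x, y)| ≤ C := by
    intro x
    refine hYso (fun y => f (x, y)) ?_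
    intro F hF ε hε
    obtain ⟨S, T, _, hTb, hp⟩ := h E₀ hE₀ F hF ε hε
    refine ⟨T, hTb, ?_⟩
    intro y hy a ha b hb
    exact hp (x, y) (fun hm => hy hm.2)
      (x, a) ⟨BX.diag _ hE₀ x, ha⟩ (x, b) ⟨BX.diag _ hE₀ x, hb⟩
  rcases hY with hYb | hYfin
  · -- Case A: Y is bounded.
    obtain ⟨F₁, hF₁, y₁, hY1⟩ := hYb
    obtain ⟨S₁, hS₁b, C₁, hC₁⟩ := hXso (fun x => f (x, y₁)) (by
      intro E hE ε hε
      obtain ⟨S, T, hSb, _, hp⟩ := h E hE F₀ hF₀ ε hε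
      refine ⟨S, hSb, ?_⟩
      intro x hx a ha b hb
      exact hp (x, y₁) (fun hm => hx hm.1)
        (a, y₁) ⟨ha, BY.diag _ hF₀ y₁⟩ (b, y₁) ⟨hb, BY.diag _ hF₀ y₁⟩)
    obtain ⟨S₆, T₆, hS₆b, _, hp₆⟩ := h E₀ hE₀ F₁ hF₁ 1 one_pos
    refine ⟨S₁ ∪ S₆, Set.univ, BX.bdd_union hS₁b hS₆b, ⟨F₁, hF₁, y₁, hY1⟩, C₁ + 1, ?_⟩
    rintro ⟨x, y⟩ hp
    have hx : x ∉ S₁ ∪ S₆ := fun hm => hp ⟨hm, Set.mem_univ y⟩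
    have hx1 : x ∉ S₁ := fun h' => hx (Or.inl h')
    have hx6 : x ∉ S₆ := fun h' => hx (Or.inr h')
    have h1 : |f (x, y) - f (x, y₁)| < 1 :=
      hp₆ (x, y₁) (fun hm => hx6 hm.1)
        (x, y) ⟨BX.diag _ hE₀ x, hY1 (Set.mem_univ y)⟩
        (x, y₁) ⟨BX.diag _ hE₀ x, BY.diag _ hF₁ y₁⟩
    have h2 : |f (x, y₁)| ≤ C₁ := hC₁ x hx1
    have h3 := abs_sub_abs_le_abs_sub (f (x, y)) (f (x, y₁))
    linarith
  · -- Case B: Y is locally finite.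
    set g : X → ℝ := fun x => sSup (Set.range fun y => |f (x, y)|) with hg_def
    have hbdd : ∀ x, BddAbove (Set.range fun y => |f (x, y)|) := by
      intro x
      obtain ⟨T, hTb, C, hC⟩ := sliceY x
      have hfin : T.Finite := hYfin T hTb
      have hsub : (Set.range fun y => |f (x, y)|) ⊆
          ((fun y => |f (x, y)|) '' T) ∪ Set.Iic C := by
        rintro r ⟨y, rfl⟩
        by_cases hy : y ∈ T
        · exact Or.inl ⟨y, hy, rfl⟩
        · exact Or.inr (hC y hy)
      exact BddAbove.mono hsub (((hfin.image _).bddAbove).union bddAbove_Iic)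
    have hg_ge : ∀ x y, |f (x, y)| ≤ g x := fun x y => le_csSup (hbdd x) ⟨y, rfl⟩
    have hg_nonneg : ∀ x, 0 ≤ g x := fun x => le_trans (abs_nonneg _) (hg_ge x y₀)
    obtain ⟨S₁, hS₁b, C₁, hC₁⟩ := hXso g (by
      intro E hE ε hε
      obtain ⟨S, T, hSb, _, hp⟩ := h E hE F₀ hF₀ (ε / 2) (by linarith)
      refine ⟨S, hSb, ?_⟩
      intro x hx a ha b hb
      have key : ∀ u v : X, u ∈ ball E x → v ∈ ball E x → g u ≤ g v + ε / 2 := by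
        intro u v hu hv
        refine Real.sSup_le ?_ (by linarith [hg_nonneg v])
        rintro r ⟨y, rfl⟩
        have h1 : |f (u, y) - f (v, y)| < ε / 2 :=
          hp (x, y) (fun hm => hx hm.1)
            (u, y) ⟨hu, BY.diag _ hF₀ y⟩ (v, y) ⟨hv, BY.diag _ hF₀ y⟩
        have h2 := hg_ge v y
        have h3 := abs_sub_abs_le_abs_sub (f (u, y)) (f (v, y))
        simp only
        linarith
      have k1 := key a b ha hb
      have k2 := key b a hb ha
      rw [abs_sub_lt_iff]
      constructor <;> linarith)
    obtain ⟨E₁, hE₁, x₁, hS₁⟩ := hS₁b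
    obtain ⟨T₅, hT₅b, C₅, hC₅⟩ := sliceY x₁
    obtain ⟨S₄, T₄, _, hT₄b, hp₄⟩ := h E₁ hE₁ F₀ hF₀ 1 one_pos
    refine ⟨S₁, T₄ ∪ T₅, ⟨E₁, hE₁, x₁, hS₁⟩, BY.bdd_union hT₄b hT₅b,
      max C₁ (C₅ + 1), ?_⟩
    rintro ⟨x, y⟩ hp
    by_cases hx : x ∈ S₁
    · have hy : y ∉ T₄ ∪ T₅ := fun hm => hp ⟨hx, hm⟩
      have hy4 : y ∉ T₄ := fun h' => hy (Or.inl h')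
      have hy5 : y ∉ T₅ := fun h' => hy (Or.inr h')
      have h1 : |f (x, y) - f (x₁, y)| < 1 :=
        hp₄ (x₁, y) (fun hm => hy4 hm.2)
          (x, y) ⟨hS₁ hx, BY.diag _ hF₀ y⟩
          (x₁, y) ⟨BX.diag _ hE₁ x₁, BY.diag _ hF₀ y⟩
      have h2 : |f (x₁, y)| ≤ C₅ := hC₅ y hy5
      have h3 := abs_sub_abs_le_abs_sub (f (x, y)) (f (x₁, y))
      refine le_trans ?_ (le_max_right _ _)
      linarith
    · refine le_trans ?_ (le_max_left _ _)
      calc |f (x, y)| ≤ g x := hg_ge x y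
        _ ≤ |g x| := le_abs_self _
        _ ≤ C₁ := hC₁ x hx
end

section
/- Let 𝓔_X be a ballean on X and 𝓔_Y a ballean on Y, both unbounded, with cof(𝓑_X) < non(𝓑_Y), where 𝓑_X and 𝓑_Y are the respective bornologies of bounded sets. If X and Y are both emu-bounded, then the product ballean on X × Y is emu-bounded. -/
universe u

/-- `cof 𝓑`: minimal cardinality of a cofinal subfamily of `𝓑`. -/
noncomputable def bornCof {X : Type u} (𝓑 : Set (Set X)) : Cardinal.{u} :=
  sInf {c : Cardinal.{u} | ∃ 𝓐 : Set (Set X), 𝓐 ⊆ 𝓑 ∧ Cardinal.mk 𝓐 = c ∧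
    ∀ B ∈ 𝓑, ∃ A ∈ 𝓐, B ⊆ A}

/-- `non 𝓑`: minimal cardinality of a subset of `X` not in `𝓑`. -/
noncomputable def bornNon {X : Type u} (𝓑 : Set (Set X)) : Cardinal.{u} :=
  sInf {c : Cardinal.{u} | ∃ A : Set X, A ∉ 𝓑 ∧ Cardinal.mk A = c}

/-- `cov 𝓑`: minimal cardinality of a subfamily of `𝓑` covering `X`. -/
noncomputable def bornCov {X : Type u} (𝓑 : Set (Set X)) : Cardinal.{u} :=
  sInf {c : Cardinal.{u} | ∃ 𝓐 : Set (Set X), 𝓐 ⊆ 𝓑 ∧ Cardinal.mk 𝓐 = c ∧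
    ⋃₀ 𝓐 = Set.univ}

/-- `add 𝓑`: minimal cardinality of a subfamily of `𝓑` whose union is not in `𝓑`. -/
noncomputable def bornAdd {X : Type u} (𝓑 : Set (Set X)) : Cardinal.{u} :=
  sInf {c : Cardinal.{u} | ∃ 𝓐 : Set (Set X), 𝓐 ⊆ 𝓑 ∧ Cardinal.mk 𝓐 = c ∧
    ⋃₀ 𝓐 ∉ 𝓑}

/-- A ballean is emu-bounded if every eventually macro-uniform `f : X → ℝ` is
bounded outside some bounded set. -/
def Ballean.EmuBounded {X : Type*} (B : Ballean X) : Prop :=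
  ∀ f : X → ℝ,
    (∀ E ∈ B.ent, ∃ S : Set X, B.Bdd S ∧ ∃ C : ℝ,
      ∀ x ∉ S, ∀ a ∈ ball E x, ∀ b ∈ ball E x, |f a - f b| ≤ C) →
    ∃ S : Set X, B.Bdd S ∧ ∃ C : ℝ, ∀ x ∉ S, |f x| ≤ C

/-!
The rows `f (·, y)` are eventually macro-uniform on `X`, and so is, on `Y`, the least eventual
bound of `|f (·, y)|`; hence off a bounded `T ⊆ Y` every row is bounded by one constant `C`, but
only off a bounded set `S_y ⊆ X` depending on `y`. If no single bounded `A ⊆ X` served all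
`y ∉ T`, choose for every `n : ℕ` and every `A` in a cofinal family of size `cof 𝓑_X` a point
`(x, y)` with `x ∉ A`, `y ∉ T` and `n < |f (x, y)|`. These `y` are fewer than `non 𝓑_Y`, hence
form a bounded set, and along a bounded set of rows `f` is eventually uniformly close to a single
row: a contradiction. A bound off `(A × Y) ∪ (X × T)` finally becomes a bound off a bounded
rectangle, again by comparing with one row and one column.
-/

open Set Cardinal

namespace Ballean

variable {X : Type*} (B : Ballean X)

lemma exists_ent_inv {E : Set (X × X)} (hE : E ∈ B.ent) :
    ∃ D ∈ B.ent, ∀ a b : X, (a, b) ∈ E → (b, a) ∈ D := by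
  obtain ⟨D, hD, h⟩ := B.comp E hE E hE
  exact ⟨D, hD, fun a b hab => h b a ⟨b, B.diag E hE b, hab⟩⟩

lemma exists_ent_comp {E F : Set (X × X)} (hE : E ∈ B.ent) (hF : F ∈ B.ent) :
    ∃ D ∈ B.ent, ∀ a b c : X, (a, b) ∈ E → (b, c) ∈ F → (a, c) ∈ D := by
  obtain ⟨F', hF', hinv⟩ := B.exists_ent_inv hF
  obtain ⟨D, hD, h⟩ := B.comp E hE F' hF'
  exact ⟨D, hD, fun a b c hab hbc => h a c ⟨b, hab, hinv b c hbc⟩⟩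

lemma ent_nonempty_s9 [Nonempty X] : B.ent.Nonempty :=
  let ⟨x⟩ := ‹Nonempty X›
  let ⟨E, hE, _⟩ := B.cover x x
  ⟨E, hE⟩

variable {B}

lemma Bdd.mono {S S' : Set X} (hS : B.Bdd S) (h : S' ⊆ S) : B.Bdd S' :=
  let ⟨E, hE, x, hx⟩ := hS
  ⟨E, hE, x, h.trans hx⟩

lemma Bdd.union {S S' : Set X} (hS : B.Bdd S) (hS' : B.Bdd S') : B.Bdd (S ∪ S') := by
  obtain ⟨E, hE, x, hx⟩ := hS
  obtain ⟨E', hE', x', hx'⟩ := hS'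
  obtain ⟨G, hG, hxx'⟩ := B.cover x x'
  obtain ⟨D, hD, hGE'⟩ := B.exists_ent_comp hG hE'
  obtain ⟨D', hD', hED⟩ := B.exists_ent_comp hE hD
  refine ⟨D', hD', x, ?_⟩
  rintro z (hz | hz)
  · exact hED x z z (hx hz) (B.diag D hD z)
  · exact hED x x z (B.diag E hE x) (hGE' x x' z hxx' (hx' hz))

variable (B) in
lemma bdd_singleton (x : X) : B.Bdd {x} :=
  let ⟨E, hE, _⟩ := B.cover x x
  ⟨E, hE, x, singleton_subset_iff.mpr (B.diag E hE x)⟩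

lemma Bdd.insert {S : Set X} (x : X) (hS : B.Bdd S) : B.Bdd (insert x S) := by
  simpa only [insert_eq] using (B.bdd_singleton x).union hS

lemma Bdd.exists_notMem (hu : ¬ B.Bdd univ) {S : Set X} (hS : B.Bdd S) : ∃ x, x ∉ S := by
  by_contra! h
  exact hu (hS.mono fun x _ => h x)

lemma bdd_sUnion [Nonempty X] {𝓐 : Set (Set X)} (hfin : 𝓐.Finite) (h𝓐 : ∀ A ∈ 𝓐, B.Bdd A) :
    B.Bdd (⋃₀ 𝓐) := by
  induction 𝓐, hfin using Set.Finite.induction_on with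
  | empty =>
    obtain ⟨x⟩ := ‹Nonempty X›
    simpa using (B.bdd_singleton x).mono (empty_subset _)
  | @insert A 𝓐' _ _ ih =>
    rw [sUnion_insert]
    exact (h𝓐 A (mem_insert _ _)).union (ih fun A' hA' => h𝓐 A' (mem_insert_of_mem _ hA'))

lemma aleph0_le_mk_of_forall_mem [Nonempty X] (hu : ¬ B.Bdd univ) {𝓐 : Set (Set X)}
    (h𝓐 : ∀ A ∈ 𝓐, B.Bdd A) (hcover : ∀ x, ∃ A ∈ 𝓐, x ∈ A) : ℵ₀ ≤ #𝓐 := by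
  rw [← not_lt, lt_aleph0_iff_set_finite]
  intro hfin
  exact hu ((bdd_sUnion hfin h𝓐).mono fun x _ => mem_sUnion.2 (hcover x))

variable (B)

/-- Eventual macro-uniformity of a function `X → ℝ`. -/
def IsEmu (g : X → ℝ) : Prop :=
  ∀ E ∈ B.ent, ∃ S : Set X, B.Bdd S ∧ ∃ C : ℝ,
    ∀ x ∉ S, ∀ a ∈ ball E x, ∀ b ∈ ball E x, |g a - g b| ≤ C

def IsEventuallyBounded (g : X → ℝ) : Prop :=
  ∃ S : Set X, B.Bdd S ∧ ∃ C : ℝ, ∀ x ∉ S, |g x| ≤ C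

def eventualBounds (g : X → ℝ) : Set ℝ :=
  {r | 0 ≤ r ∧ ∃ S, B.Bdd S ∧ ∀ x ∉ S, |g x| ≤ r}

/-- `0` when `g` is not eventually bounded. -/
noncomputable def eventualBound (g : X → ℝ) : ℝ :=
  sInf (B.eventualBounds g)

variable {B}

lemma IsEventuallyBounded.eventualBounds_nonempty {g : X → ℝ} (hg : B.IsEventuallyBounded g) :
    (B.eventualBounds g).Nonempty :=
  let ⟨S, hS, C, hC⟩ := hg
  ⟨max C 0, le_max_right _ _, S, hS, fun x hx => (hC x hx).trans (le_max_left _ _)⟩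

lemma bddBelow_eventualBounds (g : X → ℝ) : BddBelow (B.eventualBounds g) :=
  ⟨0, fun _ hr => hr.1⟩

lemma eventualBound_le_add {g₁ g₂ : X → ℝ} {D : ℝ} (hD : 0 ≤ D) (h : ∀ x, |g₁ x| ≤ |g₂ x| + D)
    (hg₂ : B.IsEventuallyBounded g₂) : B.eventualBound g₁ ≤ B.eventualBound g₂ + D := by
  rw [← sub_le_iff_le_add]
  refine le_csInf hg₂.eventualBounds_nonempty ?_
  rintro r ⟨hr, S, hS, hSr⟩
  rw [sub_le_iff_le_add']
  refine csInf_le (bddBelow_eventualBounds g₁) ⟨by linarith, S, hS, fun x hx => ?_⟩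
  linarith [h x, hSr x hx]

lemma IsEventuallyBounded.exists_bdd_abs_le_of_eventualBound_lt {g : X → ℝ} {c : ℝ}
    (hg : B.IsEventuallyBounded g) (hc : B.eventualBound g < c) :
    ∃ S, B.Bdd S ∧ ∀ x ∉ S, |g x| ≤ c :=
  let ⟨_, ⟨_, S, hS, hSr⟩, hrc⟩ := exists_lt_of_csInf_lt hg.eventualBounds_nonempty hc
  ⟨S, hS, fun x hx => (hSr x hx).trans hrc.le⟩

end Ballean

section Cardinal

variable {X : Type u}

lemma exists_cofinal_mk_eq_bornCof (𝓑 : Set (Set X)) :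
    ∃ 𝓐 ⊆ 𝓑, #𝓐 = bornCof 𝓑 ∧ ∀ B ∈ 𝓑, ∃ A ∈ 𝓐, B ⊆ A := by
  have hne : {c | ∃ 𝓐 ⊆ 𝓑, #𝓐 = c ∧ ∀ B ∈ 𝓑, ∃ A ∈ 𝓐, B ⊆ A}.Nonempty :=
    ⟨#𝓑, 𝓑, subset_rfl, rfl, fun B hB => ⟨B, hB, subset_rfl⟩⟩
  exact csInf_mem hne

lemma mem_of_mk_lt_bornNon {𝓑 : Set (Set X)} {A : Set X} (h : #A < bornNon 𝓑) : A ∈ 𝓑 := by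
  by_contra hA
  exact (csInf_le' (s := {c | ∃ A : Set X, A ∉ 𝓑 ∧ #A = c}) ⟨A, hA, rfl⟩).not_gt h

lemma Ballean.nonempty_of_lt_bornNon (B : Ballean X) {c : Cardinal.{u}}
    (h : c < bornNon {T | B.Bdd T}) : Nonempty X := by
  obtain ⟨_, _, x, _⟩ : B.Bdd ∅ :=
    mem_of_mk_lt_bornNon (𝓑 := {T | B.Bdd T}) (by simpa using h.pos)
  exact ⟨x⟩

lemma exists_cofinal_forall_bdd_range {Y : Type u} {BX : Ballean X} {BY : Ballean Y} [Nonempty X]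
    (hXu : ¬ BX.Bdd univ) (hcard : bornCof {S | BX.Bdd S} < bornNon {T | BY.Bdd T}) :
    ∃ 𝓐 : Set (Set X), (∀ A ∈ 𝓐, BX.Bdd A) ∧ (∀ S, BX.Bdd S → ∃ A ∈ 𝓐, S ⊆ A) ∧
      ∀ y : ℕ × 𝓐 → Y, BY.Bdd (range y) := by
  obtain ⟨𝓐, h𝓐, h𝓐mk, h𝓐cof⟩ := exists_cofinal_mk_eq_bornCof {S | BX.Bdd S}
  have hinf : ℵ₀ ≤ #𝓐 := BX.aleph0_le_mk_of_forall_mem hXu h𝓐 fun x =>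
    let ⟨A, hA, hxA⟩ := h𝓐cof {x} (BX.bdd_singleton x)
    ⟨A, hA, hxA rfl⟩
  refine ⟨𝓐, h𝓐, h𝓐cof, fun y => mem_of_mk_lt_bornNon (𝓑 := {T | BY.Bdd T}) ?_⟩
  calc #(range y) ≤ #(ℕ × 𝓐) := mk_range_le
    _ = #𝓐 := by simp [aleph0_mul_eq hinf]
    _ < bornNon {T | BY.Bdd T} := h𝓐mk ▸ hcard

end Cardinal

namespace Ballean

variable {X Y : Type*} {BX : Ballean X} {BY : Ballean Y} {f : X × Y → ℝ}

variable (BX BY) in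
/-- Eventual macro-uniformity of `f` for the product ballean, whose entourages are the `E ⊗ F`. -/
def IsEmuProd (f : X × Y → ℝ) : Prop :=
  ∀ E ∈ BX.ent, ∀ F ∈ BY.ent,
    ∃ (S : Set X) (T : Set Y), BX.Bdd S ∧ BY.Bdd T ∧ ∃ C : ℝ,
      ∀ p : X × Y, p ∉ S ×ˢ T →
        ∀ a ∈ (ball E p.1) ×ˢ (ball F p.2), ∀ b ∈ (ball E p.1) ×ˢ (ball F p.2),
          |f a - f b| ≤ C

lemma IsEmuProd.nonempty_fst [Nonempty Y] (hf : IsEmuProd BX BY f) (hXemu : BX.EmuBounded) :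
    Nonempty X := by
  obtain ⟨F, hF⟩ := BY.ent_nonempty_s9
  rcases BX.ent.eq_empty_or_nonempty with hE | ⟨E, hE⟩
  · obtain ⟨_, ⟨_, _, x, _⟩, _⟩ := hXemu 0 (by simp [hE])
    exact ⟨x⟩
  · obtain ⟨_, _, ⟨_, _, x, _⟩, _⟩ := hf E hE F hF
    exact ⟨x⟩

lemma IsEmuProd.isEmu_curry (hf : IsEmuProd BX BY f) (y : Y) : BX.IsEmu fun x => f (x, y) := by
  intro E hE
  obtain ⟨F, hF, -⟩ := BY.cover y y
  obtain ⟨S, _, hS, -, C, hC⟩ := hf E hE F hF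
  exact ⟨S, hS, C, fun x hx a ha b hb =>
    hC (x, y) (fun h => hx h.1) (a, y) ⟨ha, BY.diag F hF y⟩ (b, y) ⟨hb, BY.diag F hF y⟩⟩

lemma IsEmuProd.exists_bdd_abs_sub_le_snd [Nonempty X] (hf : IsEmuProd BX BY f) {T : Set Y}
    (hT : BY.Bdd T) : ∃ S, BX.Bdd S ∧ ∃ C, ∀ x ∉ S, ∀ y ∈ T, ∀ y' ∈ T,
      |f (x, y) - f (x, y')| ≤ C := by
  obtain ⟨E, hE⟩ := BX.ent_nonempty_s9
  obtain ⟨F, hF, c, hTc⟩ := hT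
  obtain ⟨S, _, hS, -, C, hC⟩ := hf E hE F hF
  exact ⟨S, hS, C, fun x hx y hy y' hy' =>
    hC (x, c) (fun h => hx h.1) (x, y) ⟨BX.diag E hE x, hTc hy⟩ (x, y') ⟨BX.diag E hE x, hTc hy'⟩⟩

lemma IsEmuProd.exists_bdd_abs_sub_le_fst [Nonempty Y] (hf : IsEmuProd BX BY f) {S : Set X}
    (hS : BX.Bdd S) : ∃ T, BY.Bdd T ∧ ∃ C, ∀ y ∉ T, ∀ x ∈ S, ∀ x' ∈ S,
      |f (x, y) - f (x', y)| ≤ C := by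
  obtain ⟨F, hF⟩ := BY.ent_nonempty_s9
  obtain ⟨E, hE, c, hSc⟩ := hS
  obtain ⟨_, T, -, hT, C, hC⟩ := hf E hE F hF
  exact ⟨T, hT, C, fun y hy x hx x' hx' =>
    hC (c, y) (fun h => hy h.2) (x, y) ⟨hSc hx, BY.diag F hF y⟩ (x', y) ⟨hSc hx', BY.diag F hF y⟩⟩

lemma IsEmuProd.isEmu_eventualBound [Nonempty X] (hf : IsEmuProd BX BY f)
    (hXemu : BX.EmuBounded) : BY.IsEmu fun y => BX.eventualBound fun x => f (x, y) := by
  intro F hF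
  obtain ⟨E, hE⟩ := BX.ent_nonempty_s9
  obtain ⟨S, T, -, hT, C, hC⟩ := hf E hE F hF
  have hclose : ∀ y ∉ T, ∀ a ∈ ball F y, ∀ b ∈ ball F y, ∀ x, |f (x, a)| ≤ |f (x, b)| + |C| := by
    intro y hy a ha b hb x
    have := hC (x, y) (fun h => hy h.2) (x, a) ⟨BX.diag E hE x, ha⟩ (x, b) ⟨BX.diag E hE x, hb⟩
    linarith [abs_sub_abs_le_abs_sub (f (x, a)) (f (x, b)), le_abs_self C]
  have hle : ∀ y ∉ T, ∀ a ∈ ball F y, ∀ b ∈ ball F y,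
      BX.eventualBound (fun x => f (x, a)) ≤ BX.eventualBound (fun x => f (x, b)) + |C| :=
    fun y hy a ha b hb =>
      eventualBound_le_add (abs_nonneg C) (hclose y hy a ha b hb) (hXemu _ (hf.isEmu_curry b))
  exact ⟨T, hT, |C|, fun y hy a ha b hb => abs_sub_le_iff.2
    ⟨by linarith [hle y hy a ha b hb], by linarith [hle y hy b hb a ha]⟩⟩

lemma IsEmuProd.exists_bdd_forall_eventually_abs_le [Nonempty X] (hf : IsEmuProd BX BY f)
    (hXemu : BX.EmuBounded) (hYemu : BY.EmuBounded) :
    ∃ T, BY.Bdd T ∧ ∃ C, ∀ y ∉ T, ∃ S, BX.Bdd S ∧ ∀ x ∉ S, |f (x, y)| ≤ C := by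
  obtain ⟨T, hT, C, hC⟩ := hYemu _ (hf.isEmu_eventualBound hXemu)
  refine ⟨T, hT, C + 1, fun y hy =>
    IsEventuallyBounded.exists_bdd_abs_le_of_eventualBound_lt (hXemu _ (hf.isEmu_curry y)) ?_⟩
  linarith [le_abs_self (BX.eventualBound fun x => f (x, y)), hC y hy]

end Ballean

namespace Ballean.IsEmuProd

variable {X Y : Type u} {BX : Ballean X} {BY : Ballean Y} {f : X × Y → ℝ}

lemma exists_bdd_abs_le_of_cof_lt_non [Nonempty X] (hf : IsEmuProd BX BY f)
    (hXu : ¬ BX.Bdd univ) (hcard : bornCof {S | BX.Bdd S} < bornNon {T | BY.Bdd T})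
    {T : Set Y} {C : ℝ} (hrows : ∀ y ∉ T, ∃ S, BX.Bdd S ∧ ∀ x ∉ S, |f (x, y)| ≤ C) :
    ∃ A, BX.Bdd A ∧ ∃ M, ∀ x ∉ A, ∀ y ∉ T, |f (x, y)| ≤ M := by
  obtain ⟨𝓐, h𝓐, h𝓐cof, hrange⟩ := exists_cofinal_forall_bdd_range (BY := BY) hXu hcard
  by_contra! hbig
  choose x hx y hy hxy using fun p : ℕ × 𝓐 => hbig p.2 (h𝓐 p.2 p.2.2) p.1
  obtain ⟨Sz, hSz, Cz, hCz⟩ := hf.exists_bdd_abs_sub_le_snd (hrange y)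
  obtain ⟨x₀⟩ := ‹Nonempty X›
  obtain ⟨A₀, hA₀, -⟩ := h𝓐cof {x₀} (BX.bdd_singleton x₀)
  set y₀ := y (0, ⟨A₀, hA₀⟩)
  obtain ⟨S₀, hS₀, hrow₀⟩ := hrows y₀ (hy _)
  obtain ⟨A, hA, hSA⟩ := h𝓐cof _ (hSz.union hS₀)
  obtain ⟨n, hn⟩ := exists_nat_gt (C + Cz)
  set p : ℕ × 𝓐 := (n, ⟨A, hA⟩)
  have hxp : x p ∉ Sz ∪ S₀ := fun h => hx p (hSA h)
  have hnear := hCz (x p) (fun h => hxp (Or.inl h)) (y p) ⟨p, rfl⟩ y₀ ⟨_, rfl⟩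
  have hrow := hrow₀ (x p) (fun h => hxp (Or.inr h))
  linarith [hxy p, abs_sub_abs_le_abs_sub (f (x p, y p)) (f (x p, y₀))]

lemma exists_rect_of_abs_le (hf : IsEmuProd BX BY f) (hXu : ¬ BX.Bdd univ)
    (hYu : ¬ BY.Bdd univ) {A : Set X} {T : Set Y} {M : ℝ} (hA : BX.Bdd A) (hT : BY.Bdd T)
    (hM : ∀ x ∉ A, ∀ y ∉ T, |f (x, y)| ≤ M) :
    ∃ (S : Set X) (T' : Set Y), BX.Bdd S ∧ BY.Bdd T' ∧
      ∃ C : ℝ, ∀ p : X × Y, p ∉ S ×ˢ T' → |f p| ≤ C := by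
  obtain ⟨x₀, hx₀⟩ := hA.exists_notMem hXu
  obtain ⟨y₀, hy₀⟩ := hT.exists_notMem hYu
  have : Nonempty X := ⟨x₀⟩
  have : Nonempty Y := ⟨y₀⟩
  obtain ⟨S, hS, C₁, hC₁⟩ := hf.exists_bdd_abs_sub_le_snd (hT.insert y₀)
  obtain ⟨T', hT', C₂, hC₂⟩ := hf.exists_bdd_abs_sub_le_fst (hA.insert x₀)
  refine ⟨S ∪ A, T' ∪ T, hS.union hA, hT'.union hT, M + |C₁| + |C₂|, ?_⟩
  rintro ⟨x, y⟩ hp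
  by_cases hxA : x ∈ A <;> by_cases hyT : y ∈ T
  · exact absurd ⟨Or.inr hxA, Or.inr hyT⟩ hp
  · have hyT' : y ∉ T' := fun h => hp ⟨Or.inr hxA, Or.inl h⟩
    have := hC₂ y hyT' x (mem_insert_of_mem _ hxA) x₀ (mem_insert _ _)
    linarith [hM x₀ hx₀ y hyT, abs_sub_abs_le_abs_sub (f (x, y)) (f (x₀, y)), le_abs_self C₂,
      abs_nonneg C₁]
  · have hxS : x ∉ S := fun h => hp ⟨Or.inl h, Or.inr hyT⟩
    have := hC₁ x hxS y (mem_insert_of_mem _ hyT) y₀ (mem_insert _ _)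
    linarith [hM x hxA y₀ hy₀, abs_sub_abs_le_abs_sub (f (x, y)) (f (x, y₀)), le_abs_self C₁,
      abs_nonneg C₂]
  · linarith [hM x hxA y hyT, abs_nonneg C₁, abs_nonneg C₂]

end Ballean.IsEmuProd

/-- If `X`, `Y` are unbounded emu-bounded balleans with `cof 𝓑_X < non 𝓑_Y`,
then the product ballean on `X × Y` is emu-bounded. -/
theorem prod_emuBounded_of_cof_lt_non {X Y : Type u} (BX : Ballean X) (BY : Ballean Y)
    (hXu : ¬ BX.Bdd Set.univ) (hYu : ¬ BY.Bdd Set.univ)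
    (hcard : bornCof {S : Set X | BX.Bdd S} < bornNon {T : Set Y | BY.Bdd T})
    (hXemu : BX.EmuBounded) (hYemu : BY.EmuBounded) :
    ∀ f : X × Y → ℝ,
      (∀ E ∈ BX.ent, ∀ F ∈ BY.ent,
        ∃ (S : Set X) (T : Set Y), BX.Bdd S ∧ BY.Bdd T ∧ ∃ C : ℝ,
          ∀ p : X × Y, p ∉ S ×ˢ T →
            ∀ a ∈ (ball E p.1) ×ˢ (ball F p.2), ∀ b ∈ (ball E p.1) ×ˢ (ball F p.2),
              |f a - f b| ≤ C) →
      ∃ (S : Set X) (T : Set Y), BX.Bdd S ∧ BY.Bdd T ∧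
        ∃ C : ℝ, ∀ p : X × Y, p ∉ S ×ˢ T → |f p| ≤ C := by
  intro f hf
  change Ballean.IsEmuProd BX BY f at hf
  have : Nonempty Y := BY.nonempty_of_lt_bornNon hcard
  have : Nonempty X := hf.nonempty_fst hXemu
  obtain ⟨T, hT, C, hrows⟩ := hf.exists_bdd_forall_eventually_abs_le hXemu hYemu
  obtain ⟨A, hA, M, hM⟩ := hf.exists_bdd_abs_le_of_cof_lt_non hXu hcard hrows
  exact hf.exists_rect_of_abs_le hXu hYu hA hT hM
end

section
/- Let G be an uncountable group such that every countable subset of G is contained in a countable normal subgroup of G (G is ω₁-normal). Then every function f : G → ℝ that is slowly oscillating with respect to the finitary ballean of G is constant at infinity: there exists c ∈ ℝ such that for every ε > 0 the set {x ∈ G : |f(x) − c| ≥ ε} is finite. -/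
/-!
Slow oscillation gives, for each `h`, `f (h * x) ≈ f x` outside a finite set of `x`. For a
countable normal subgroup `H` the union of these finite sets over `h ∈ H` is countable, so some
`g` of the uncountable group avoids it: `f (h * g) ≈ f g` for all `h ∈ H`. For cofinitely many
`x ∈ H` also `f x ≈ f (g * x)`, and `g * x = (g * x * g⁻¹) * g` with `g * x * g⁻¹ ∈ H`, so
`f x ≈ f g`. If `f` were not Cauchy along the cofinite filter, countably many pairs escaping
every finite set, with values of `f` far apart, would lie in one countable normal subgroup.
-/

/-- The ball `E_F[x] = {x} ∪ Fx` of the finitary ballean of a group. -/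
def grpBall {G : Type*} [Group G] (F : Set G) (x : G) : Set G :=
  insert x ((fun g => g * x) '' F)

open Filter Function Set

theorem exists_injective_pairs_of_forall_finset {α : Type*} {p : α → α → Prop}
    (h : ∀ s : Finset α, ∃ x ∉ s, ∃ y ∉ s, p x y) :
    ∃ a b : ℕ → α, Injective a ∧ Injective b ∧ ∀ n, p (a n) (b n) := by
  classical
  choose x hx y hy hxy using h
  let s : ℕ → Finset α := fun n => Nat.rec ∅ (fun _ t => insert (x t) (insert (y t) t)) n
  have hs : Monotone s := monotone_nat_of_le_succ fun n =>
    (Finset.subset_insert _ _).trans (Finset.subset_insert _ _)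
  have hxs (n : ℕ) : x (s n) ∈ s (n + 1) := Finset.mem_insert_self _ _
  have hys (n : ℕ) : y (s n) ∈ s (n + 1) := Finset.mem_insert_of_mem (Finset.mem_insert_self _ _)
  refine ⟨fun n => x (s n), fun n => y (s n), .of_lt_imp_ne fun m n hmn heq => ?_,
    .of_lt_imp_ne fun m n hmn heq => ?_, fun n => hxy (s n)⟩
  · exact hx (s n) (heq ▸ hs hmn (hxs m))
  · exact hy (s n) (heq ▸ hs hmn (hys m))

def IsOmega1Normal (G : Type*) [Group G] : Prop :=
  ∀ S : Set G, S.Countable →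
    ∃ H : Subgroup G, H.Normal ∧ (H : Set G).Countable ∧ S ⊆ (H : Set G)

section Ballean

variable {G : Type*} [Group G]

theorem mem_grpBall_self (F : Set G) (x : G) : x ∈ grpBall F x :=
  mem_insert x _

theorem mul_mem_grpBall {F : Set G} {g : G} (hg : g ∈ F) (x : G) : g * x ∈ grpBall F x :=
  mem_insert_of_mem x ⟨g, hg, rfl⟩

def IsSlowlyOscillating (f : G → ℝ) : Prop :=
  ∀ F : Set G, F.Finite → ∀ ε : ℝ, 0 < ε →
    ∃ B : Set G, B.Finite ∧ ∀ x ∉ B, ∀ a ∈ grpBall F x, ∀ b ∈ grpBall F x, |f a - f b| < ε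

namespace IsSlowlyOscillating

variable {f : G → ℝ} {ε : ℝ}

theorem eventually_dist_mul_lt (hf : IsSlowlyOscillating f) (g : G) (hε : 0 < ε) :
    ∀ᶠ x in cofinite, dist (f (g * x)) (f x) < ε := by
  obtain ⟨B, hB, hfB⟩ := hf {g} (finite_singleton g) ε hε
  exact hB.eventually_cofinite_notMem.mono fun x hx =>
    hfB x hx _ (mul_mem_grpBall (mem_singleton g) x) _ (mem_grpBall_self _ x)

theorem exists_forall_dist_mul_lt [Uncountable G] (hf : IsSlowlyOscillating f) {H : Set G}
    (hH : H.Countable) (hε : 0 < ε) : ∃ g, ∀ h ∈ H, dist (f (h * g)) (f g) < ε := by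
  have hbad : (⋃ h ∈ H, {x | ¬dist (f (h * x)) (f x) < ε}).Countable :=
    hH.biUnion fun h _ => (eventually_cofinite.mp (hf.eventually_dist_mul_lt h hε)).countable
  obtain ⟨g, hg⟩ : ∃ g, g ∉ ⋃ h ∈ H, {x | ¬dist (f (h * x)) (f x) < ε} :=
    (ne_univ_iff_exists_notMem _).mp fun huniv => not_countable_univ (huniv ▸ hbad)
  exact ⟨g, by simpa using hg⟩

theorem exists_eventually_dist_lt_of_normal [Uncountable G] (hf : IsSlowlyOscillating f)
    {H : Subgroup G} (hHn : H.Normal) (hH : (H : Set G).Countable) (hε : 0 < ε) :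
    ∃ c, ∀ᶠ x in cofinite, x ∈ H → dist (f x) c < ε := by
  obtain ⟨g, hg⟩ := hf.exists_forall_dist_mul_lt hH (half_pos hε)
  refine ⟨f g, (hf.eventually_dist_mul_lt g (half_pos hε)).mono fun x hx hxH => ?_⟩
  have hgx : dist (f (g * x)) (f g) < ε / 2 := by
    simpa using hg _ (hHn.conj_mem x hxH g)
  calc dist (f x) (f g) ≤ dist (f (g * x)) (f x) + dist (f (g * x)) (f g) :=
        dist_triangle_left _ _ _
    _ < ε / 2 + ε / 2 := add_lt_add hx hgx
    _ = ε := add_halves ε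

theorem cauchy_map_cofinite [Uncountable G] (hG : IsOmega1Normal G)
    (hf : IsSlowlyOscillating f) : Cauchy (map f cofinite) := by
  refine Metric.cauchy_iff.mpr ⟨inferInstance, fun ε hε => ?_⟩
  by_contra! hfar
  obtain ⟨a, b, ha, hb, hab⟩ := exists_injective_pairs_of_forall_finset fun s : Finset G => by
    obtain ⟨_, ⟨x, hx, rfl⟩, _, ⟨y, hy, rfl⟩, hxy⟩ := hfar (f '' (↑s)ᶜ) <| mem_map.mpr <|
      mem_of_superset s.finite_toSet.compl_mem_cofinite (subset_preimage_image f _)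
    exact ⟨x, hx, y, hy, hxy⟩
  obtain ⟨H, hHn, hH, hsub⟩ :=
    hG (range a ∪ range b) ((countable_range a).union (countable_range b))
  obtain ⟨c, hc⟩ := hf.exists_eventually_dist_lt_of_normal hHn hH (half_pos hε)
  obtain ⟨n, hna, hnb⟩ :=
    ((ha.tendsto_cofinite.eventually hc).and (hb.tendsto_cofinite.eventually hc)).exists
  have hac := hna (hsub (Or.inl ⟨n, rfl⟩))
  have hbc := hnb (hsub (Or.inr ⟨n, rfl⟩))
  linarith [hab n, dist_triangle_right (f (a n)) (f (b n)) c]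

end IsSlowlyOscillating

end Ballean

/-- If `G` is an uncountable `ω₁`-normal group (every countable subset lies in a
countable normal subgroup), then every slowly oscillating function on the finitary
ballean of `G` is constant at infinity. -/
theorem so_function_constant_at_infinity {G : Type*} [Group G]
    (hG : Cardinal.aleph0 < Cardinal.mk G)
    (hnormal : ∀ S : Set G, S.Countable →
      ∃ H : Subgroup G, H.Normal ∧ (H : Set G).Countable ∧ S ⊆ (H : Set G))
    (f : G → ℝ)
    (hf : ∀ F : Set G, F.Finite → ∀ ε : ℝ, 0 < ε →
      ∃ B : Set G, B.Finite ∧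
        ∀ x ∉ B, ∀ a ∈ grpBall F x, ∀ b ∈ grpBall F x, |f a - f b| < ε) :
    ∃ c : ℝ, ∀ ε : ℝ, 0 < ε → {x : G | ε ≤ |f x - c|}.Finite := by
  have : Uncountable G := Cardinal.aleph0_lt_mk_iff.mp hG
  obtain ⟨c, hc⟩ := CompleteSpace.complete (IsSlowlyOscillating.cauchy_map_cofinite hnormal hf)
  refine ⟨c, fun ε hε => ?_⟩
  simpa [Real.dist_eq] using eventually_cofinite.mp (Metric.tendsto_nhds.mp hc ε hε)
end
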